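/- Let X take values in {1,...,n} with strictly positive distribution. For nonempty a, b ⊆ {2,...,n}, let X_a be the indicator of X ∈ a and let (X_i)_{i∈b} be the family of indicators of the singleton events X = i for i ∈ b. Then H(X_a | X_i, i ∈ b) > 0 if and only if a \ b is nonempty. -/
import Mathlib


open scoped BigOperators

/-- `μ` is a probability mass function on the finite sample space `Ω`. -/
def IsPMF {Ω : Type*} [Fintype Ω] (μ : Ω → ℝ) : Prop :=
  (∀ ω, 0 ≤ μ ω) ∧ ∑ ω, μ ω = 1

/-- The probability that the random variable `X` takes the value `s`. -/
noncomputable def prob {Ω S : Type*} [Fintype Ω] [DecidableEq S]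
    (μ : Ω → ℝ) (X : Ω → S) (s : S) : ℝ :=
  ∑ ω ∈ Finset.univ.filter fun ω => X ω = s, μ ω

/-- Shannon entropy (natural logarithm) of a random variable with finite codomain. -/
noncomputable def entropy {Ω S : Type*} [Fintype Ω] [Fintype S] [DecidableEq S]
    (μ : Ω → ℝ) (X : Ω → S) : ℝ :=
  ∑ s, Real.negMulLog (prob μ X s)

/-- Conditional Shannon entropy `H(X | Y) = H(X, Y) - H(Y)`. -/
noncomputable def condEntropy {Ω S T : Type*} [Fintype Ω] [Fintype S] [Fintype T]
    [DecidableEq S] [DecidableEq T] (μ : Ω → ℝ) (X : Ω → S) (Y : Ω → T) : ℝ :=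
  entropy μ (fun ω => (X ω, Y ω)) - entropy μ Y


lemma prob_nonneg' {Ω S : Type*} [Fintype Ω] [DecidableEq S]
    {μ : Ω → ℝ} (hμ : ∀ ω, 0 ≤ μ ω) (X : Ω → S) (s : S) : 0 ≤ prob μ X s :=
  Finset.sum_nonneg fun ω _ => hμ ω

lemma nml_add_lt {p q : ℝ} (hp : 0 < p) (hq : 0 < q) :
    Real.negMulLog (p + q) < Real.negMulLog p + Real.negMulLog q := by
  simp only [Real.negMulLog]
  have h1 : Real.log p ≤ Real.log (p + q) := Real.log_le_log hp (by linarith)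
  have h2 : Real.log q < Real.log (p + q) := Real.log_lt_log hq (by linarith)
  nlinarith [mul_nonneg hp.le (sub_nonneg.2 h1), mul_pos hq (sub_pos.2 h2)]

lemma nml_add_le {p q : ℝ} (hp : 0 ≤ p) (hq : 0 ≤ q) :
    Real.negMulLog (p + q) ≤ Real.negMulLog p + Real.negMulLog q := by
  rcases hp.eq_or_lt with h | h
  · simp [← h]
  rcases hq.eq_or_lt with h' | h'
  · simp [← h']
  · exact (nml_add_lt h h').le

lemma prob_split {Ω T : Type*} [Fintype Ω] [Fintype T] [DecidableEq T]
    (μ : Ω → ℝ) (Z : Ω → Bool) (Y : Ω → T) (y : T) :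
    prob μ Y y = prob μ (fun ω => (Z ω, Y ω)) (false, y)
      + prob μ (fun ω => (Z ω, Y ω)) (true, y) := by
  simp only [prob, Finset.sum_filter]
  rw [← Finset.sum_add_distrib]
  refine Finset.sum_congr rfl fun ω _ => ?_
  rcases Bool.eq_false_or_eq_true (Z ω) with h | h <;>
    by_cases hy : Y ω = y <;> simp [h, hy, Prod.ext_iff]

lemma condEntropy_bool_eq {Ω T : Type*} [Fintype Ω] [Fintype T] [DecidableEq T]
    (μ : Ω → ℝ) (Z : Ω → Bool) (Y : Ω → T) :
    condEntropy μ Z Y = ∑ y,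
      (Real.negMulLog (prob μ (fun ω => (Z ω, Y ω)) (false, y))
        + Real.negMulLog (prob μ (fun ω => (Z ω, Y ω)) (true, y))
        - Real.negMulLog (prob μ (fun ω => (Z ω, Y ω)) (false, y)
            + prob μ (fun ω => (Z ω, Y ω)) (true, y))) := by
  unfold condEntropy entropy
  rw [Fintype.sum_prod_type_right]
  rw [← Finset.sum_sub_distrib]
  refine Finset.sum_congr rfl fun y _ => ?_
  rw [prob_split μ Z Y y, Fintype.sum_bool]
  ring

/-- For nonempty `a, b ⊆ {2,…,n}` and `X` with strictly positive distribution on `{1,…,n}`,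
the indicator of `X ∈ a` has positive conditional entropy given the singleton indicators
`(X = i)_{i ∈ b}` if and only if `a \ b` is nonempty. -/
theorem indicator_cond_singletons (n : ℕ) {Ω : Type*} [Fintype Ω] (μ : Ω → ℝ) (hμ : IsPMF μ)
    (X : Ω → ℕ) (hrange : ∀ ω, 0 < μ ω → X ω ∈ Finset.Icc 1 n)
    (hpos : ∀ i ∈ Finset.Icc 1 n, 0 < prob μ X i)
    (a b : Finset ℕ) (ha : a ⊆ Finset.Icc 2 n) (hb : b ⊆ Finset.Icc 2 n)
    (hane : a.Nonempty) (hbne : b.Nonempty) :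
    0 < condEntropy μ (fun ω => decide (X ω ∈ a))
        (fun ω (i : {i // i ∈ b}) => decide (X ω = i.1)) ↔ (a \ b).Nonempty := by
  classical
  set Z : Ω → Bool := fun ω => decide (X ω ∈ a) with hZ
  set Y : Ω → ({i // i ∈ b} → Bool) := fun ω i => decide (X ω = i.1) with hY
  set J : Bool × ({i // i ∈ b} → Bool) → ℝ := prob μ (fun ω => (Z ω, Y ω)) with hJ
  have hJnn : ∀ s, 0 ≤ J s := fun s => prob_nonneg' hμ.1 _ s
  have hterm_nn : ∀ y, 0 ≤ Real.negMulLog (J (false, y)) + Real.negMulLog (J (true, y))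
      - Real.negMulLog (J (false, y) + J (true, y)) := fun y => by
    have := nml_add_le (hJnn (false, y)) (hJnn (true, y)); linarith
  rw [condEntropy_bool_eq μ Z Y]
  constructor
  · -- 0 < H → (a \ b).Nonempty ; contrapositive
    intro hH
    by_contra hab
    have hsub : a ⊆ b := by
      intro i hi
      by_contra hib
      exact hab ⟨i, Finset.mem_sdiff.2 ⟨hi, hib⟩⟩
    -- Z is a function of Y
    have hzero : ∀ y, J (false, y) = 0 ∨ J (true, y) = 0 := by
      intro y
      by_cases hy : ∃ i : {i // i ∈ b}, i.1 ∈ a ∧ y i = true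
      · left
        refine Finset.sum_eq_zero fun ω hω => ?_
        exfalso
        obtain ⟨i, hia, hyi⟩ := hy
        rw [Finset.mem_filter] at hω
        have hprod := hω.2
        have hZω : Z ω = false := (Prod.ext_iff.1 hprod).1
        have hYω : Y ω = y := (Prod.ext_iff.1 hprod).2
        have : decide (X ω = i.1) = true := by rw [hY] at hYω; rw [← congrFun hYω i] at hyi; exact hyi
        have hXi : X ω = i.1 := of_decide_eq_true this
        have : Z ω = true := decide_eq_true (by rw [hXi]; exact hia)
        simp [hZω] at this
      · right
        refine Finset.sum_eq_zero fun ω hω => ?_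
        exfalso
        rw [Finset.mem_filter] at hω
        have hprod := hω.2
        have hZω : Z ω = true := (Prod.ext_iff.1 hprod).1
        have hYω : Y ω = y := (Prod.ext_iff.1 hprod).2
        have hXa : X ω ∈ a := of_decide_eq_true hZω
        refine hy ⟨⟨X ω, hsub hXa⟩, hXa, ?_⟩
        rw [← hYω, hY]
        simp
    have : ∑ y, (Real.negMulLog (J (false, y)) + Real.negMulLog (J (true, y))
        - Real.negMulLog (J (false, y) + J (true, y))) = 0 := by
      refine Finset.sum_eq_zero fun y _ => ?_
      rcases hzero y with h | h <;> rw [h] <;> simp [Real.negMulLog_zero]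
    rw [this] at hH
    exact lt_irrefl 0 hH
  · -- (a \ b).Nonempty → 0 < H
    rintro ⟨j, hj⟩
    rw [Finset.mem_sdiff] at hj
    obtain ⟨hja, hjb⟩ := hj
    have hj2 : j ∈ Finset.Icc 2 n := ha hja
    rw [Finset.mem_Icc] at hj2
    set y₀ : {i // i ∈ b} → Bool := fun _ => false with hy₀
    -- positivity of the two joint probabilities at y₀
    have hb2 : ∀ i : {i // i ∈ b}, 2 ≤ i.1 := fun i => (Finset.mem_Icc.1 (hb i.2)).1
    have h1a : (1 : ℕ) ∉ a := fun h => by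
      have := (Finset.mem_Icc.1 (ha h)).1; omega
    have hsubT : Finset.univ.filter (fun ω => X ω = j) ⊆
        Finset.univ.filter (fun ω => (Z ω, Y ω) = (true, y₀)) := by
      intro ω hω
      rw [Finset.mem_filter] at hω ⊢
      refine ⟨Finset.mem_univ ω, ?_⟩
      have hXj : X ω = j := hω.2
      have hZt : Z ω = true := decide_eq_true (by rw [hXj]; exact hja)
      have hYt : Y ω = y₀ := by
        funext i
        rw [hY, hy₀]
        simp only
        refine decide_eq_false fun h => ?_
        rw [hXj] at h; rw [h] at hjb; exact hjb i.2
      rw [hZt, hYt]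
    have hsubF : Finset.univ.filter (fun ω => X ω = 1) ⊆
        Finset.univ.filter (fun ω => (Z ω, Y ω) = (false, y₀)) := by
      intro ω hω
      rw [Finset.mem_filter] at hω ⊢
      refine ⟨Finset.mem_univ ω, ?_⟩
      have hX1 : X ω = 1 := hω.2
      have hZf : Z ω = false := decide_eq_false (by rw [hX1]; exact h1a)
      have hYf : Y ω = y₀ := by
        funext i
        rw [hY, hy₀]
        simp only
        refine decide_eq_false fun h => ?_
        have := hb2 i; omega
      rw [hZf, hYf]
    have hn2 : 2 ≤ n := by
      have := hj2; omega
    have hp1 : 0 < prob μ X 1 := hpos 1 (Finset.mem_Icc.2 ⟨le_refl 1, by omega⟩)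
    have hpj : 0 < prob μ X j := hpos j (Finset.mem_Icc.2 ⟨by omega, hj2.2⟩)
    have hJt : 0 < J (true, y₀) :=
      lt_of_lt_of_le hpj (Finset.sum_le_sum_of_subset_of_nonneg hsubT fun ω _ _ => hμ.1 ω)
    have hJf : 0 < J (false, y₀) :=
      lt_of_lt_of_le hp1 (Finset.sum_le_sum_of_subset_of_nonneg hsubF fun ω _ _ => hμ.1 ω)
    refine Finset.sum_pos' (fun y _ => hterm_nn y) ⟨y₀, Finset.mem_univ y₀, ?_⟩
    have := nml_add_lt hJf hJt
    linarith
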